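/- Let (W, S) be a Coxeter system, I ⊆ S, and t a reflection of W. For w ∈ W, we have twW_I = wW_I if and only if ℓ((tw)^I) = ℓ(w^I), where u^I denotes the minimal-length representative of the coset uW_I. -/

import Mathlib

variable {B W : Type*} [Group W] {M : CoxeterMatrix B}

/-- The standard parabolic subgroup `W_I`. -/
def parab (cs : CoxeterSystem M W) (I : Set B) : Subgroup W :=
  Subgroup.closure (cs.simple '' I)

/-- `ℓ(w^I)`: the minimal length of an element in the coset `x = wW_I`. -/
noncomputable def minLenQ (cs : CoxeterSystem M W) (I : Set B) (x : W ⧸ parab cs I) : ℕ :=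
  sInf (cs.length '' {u : W | (QuotientGroup.mk u : W ⧸ parab cs I) = x})

/-!
Following Björner–Brenti, `W` acts on `W × ℤˣ` by letting `s_i` send `(x, ε)` to
`(s_i x s_i, ±ε)`, the sign flipping exactly when `x = s_i`. The resulting cocycle `reflSign w t`
is `-1` exactly when `t` is a right inversion of `w`; this gives the strong exchange condition and
the rule `N(ab) = N(a) ∆ a N(b) a⁻¹` for left inversion sets.

If the minimal lengths in `wW_I` and `twW_I` agree, their minimal representatives `u` and `x`
satisfy `ℓ(tu) > ℓ(u)` and `ℓ(tx) > ℓ(x)`. Writing `x = tu·z` with `z ∈ W_I`, the rule above makes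
`u⁻¹tu` a left inversion of `z`, hence by strong exchange a reflection of `W_I`; so `tu ∈ uW_I`.
-/

theorem mul_mul_inv_eq_iff_eq_inv_mul_mul {G : Type*} [Group G] (a x y : G) :
    a * x * a⁻¹ = y ↔ x = a⁻¹ * y * a := by
  constructor <;> rintro rfl <;> group

namespace CoxeterSystem

open List

variable (cs : CoxeterSystem M W)

local prefix:100 "s" => cs.simple
local prefix:100 "π" => cs.wordProd
local prefix:100 "ℓ" => cs.length

section ReflectionSign

open scoped Classical

theorem simple_mul_mul_simple_eq_iff (i : B) (x y : W) :
    s i * x * s i = y ↔ x = s i * y * s i := by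
  constructor <;> rintro rfl <;> simp [mul_assoc]

noncomputable def reflSignPerm (i : B) : Equiv.Perm (W × ℤˣ) :=
  Function.Involutive.toPerm (fun p => (s i * p.1 * s i, p.2 * if p.1 = s i then -1 else 1))
    (by
      rintro ⟨x, ε⟩
      dsimp only
      rw [simple_mul_mul_simple_eq_iff, simple_mul_simple_cancel_right, mul_assoc ε,
        Int.units_mul_self, mul_one]
      simp [mul_assoc])

theorem reflSignPerm_apply (i : B) (x : W) (ε : ℤˣ) :
    cs.reflSignPerm i (x, ε) = (s i * x * s i, ε * if x = s i then -1 else 1) :=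
  rfl

theorem reflSignPerm_mul_pow_apply (i j : B) (k : ℕ) (x : W) (ε : ℤˣ) :
    ((cs.reflSignPerm i * cs.reflSignPerm j) ^ k) (x, ε) =
      ((s i * s j) ^ k * x * ((s i * s j) ^ k)⁻¹,
        ε * ∏ r ∈ Finset.range (2 * k), if x = (s i * s j)⁻¹ ^ r * s j then -1 else 1) := by
  set d := s i * s j
  have hsd : SemiconjBy (s j) d d⁻¹ := by
    simp [SemiconjBy, d, mul_assoc]
  induction k with
  | zero => simp
  | succ k ih =>
    have h₁ : d ^ k * x * (d ^ k)⁻¹ = s j ↔ x = d⁻¹ ^ (2 * k) * s j := by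
      rw [mul_mul_inv_eq_iff_eq_inv_mul_mul, ← inv_pow, mul_assoc, (hsd.pow_right k).eq,
        ← mul_assoc, ← pow_add, two_mul]
    have h₂ : s j * (d ^ k * x * (d ^ k)⁻¹) * s j = s i ↔ x = d⁻¹ ^ (2 * k + 1) * s j := by
      have hsis : s j * s i * s j = d⁻¹ * s j := by rw [mul_assoc]; exact hsd.eq
      rw [simple_mul_mul_simple_eq_iff, hsis, mul_mul_inv_eq_iff_eq_inv_mul_mul, ← inv_pow,
        mul_assoc, mul_assoc, (hsd.pow_right k).eq, ← mul_assoc, ← mul_assoc, ← pow_succ,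
        ← pow_add, show k + 1 + k = 2 * k + 1 by ring]
    rw [pow_succ', Equiv.Perm.mul_apply, ih, Equiv.Perm.mul_apply, reflSignPerm_apply,
      reflSignPerm_apply, h₁, h₂, show 2 * (k + 1) = 2 * k + 1 + 1 by ring,
      Finset.prod_range_succ, Finset.prod_range_succ]
    exact Prod.ext (by simp [d, pow_succ', mul_assoc]) (by simp only [mul_assoc])

theorem isLiftable_reflSignPerm : M.IsLiftable cs.reflSignPerm := by
  intro i j
  have hd : (s i * s j) ^ M i j = 1 := cs.simple_mul_simple_pow i j
  -- the reflections `(s_i s_j)⁻¹ ^ r * s_j`, `r < 2m`, run twice through the same `m` reflections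
  have hperiod : ∀ r, (s i * s j)⁻¹ ^ (M i j + r) = (s i * s j)⁻¹ ^ r := fun r => by
    rw [pow_add, inv_pow, hd, inv_one, one_mul]
  ext ⟨x, ε⟩ : 1
  rw [reflSignPerm_mul_pow_apply, hd, two_mul, Finset.prod_range_add]
  simp only [hperiod, Int.units_mul_self]
  simp

noncomputable def reflSignRep : W →* Equiv.Perm (W × ℤˣ) :=
  cs.lift ⟨cs.reflSignPerm, cs.isLiftable_reflSignPerm⟩

theorem reflSignRep_simple (i : B) : cs.reflSignRep (s i) = cs.reflSignPerm i :=
  cs.lift_apply_simple cs.isLiftable_reflSignPerm i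

noncomputable def reflSign (w x : W) : ℤˣ := (cs.reflSignRep w (x, 1)).2

theorem reflSignRep_apply (w x : W) (ε : ℤˣ) :
    cs.reflSignRep w (x, ε) = (w * x * w⁻¹, ε * cs.reflSign w x) := by
  induction w using cs.simple_induction_left generalizing ε with
  | one => simp [reflSign]
  | mul_simple_left w i ih =>
    have h : ∀ δ, cs.reflSignRep (s i * w) (x, δ) = (s i * (w * x * w⁻¹) * s i,
        δ * cs.reflSign w x * if w * x * w⁻¹ = s i then -1 else 1) := fun δ => by
      rw [map_mul, Equiv.Perm.mul_apply, ih, reflSignRep_simple, reflSignPerm_apply]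
    have hsign :
        cs.reflSign (s i * w) x = cs.reflSign w x * if w * x * w⁻¹ = s i then -1 else 1 := by
      rw [reflSign, h, one_mul]
    rw [h, hsign, mul_assoc]
    simp [mul_assoc]

theorem reflSign_mul (a b x : W) :
    cs.reflSign (a * b) x = cs.reflSign b x * cs.reflSign a (b * x * b⁻¹) := by
  have h := congrArg Prod.snd (DFunLike.congr_fun (map_mul cs.reflSignRep a b) (x, 1))
  simpa only [Equiv.Perm.mul_apply, reflSignRep_apply, one_mul] using h

theorem reflSign_one (x : W) : cs.reflSign 1 x = 1 := by
  rw [reflSign, map_one]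
  rfl

theorem reflSign_simple (i : B) (x : W) :
    cs.reflSign (s i) x = if x = s i then -1 else 1 := by
  simp [reflSign, reflSignRep_simple, reflSignPerm_apply]

theorem reflSign_wordProd (ω : List B) (x : W) :
    cs.reflSign (π ω) x = (-1) ^ (cs.rightInvSeq ω).count x := by
  induction ω with
  | nil => simp [reflSign_one]
  | cons i ω ih =>
    have hconj : (π ω)⁻¹ * s i * π ω = x ↔ π ω * x * (π ω)⁻¹ = s i := by
      rw [eq_comm, mul_mul_inv_eq_iff_eq_inv_mul_mul]
    rw [wordProd_cons, reflSign_mul, reflSign_simple, ih, rightInvSeq, count_cons]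
    by_cases h : π ω * x * (π ω)⁻¹ = s i <;> simp [h, hconj, pow_succ]

variable {cs}

theorem mem_rightInvSeq_of_reflSign_wordProd_eq_neg_one {ω : List B} {t : W}
    (h : cs.reflSign (π ω) t = -1) : t ∈ cs.rightInvSeq ω := by
  refine List.count_pos_iff.mp (Nat.pos_of_ne_zero fun h0 => ?_)
  rw [reflSign_wordProd, h0, pow_zero] at h
  exact absurd h (by decide)

theorem isRightInversion_of_reflSign_eq_neg_one {w t : W} (h : cs.reflSign w t = -1) :
    cs.IsRightInversion w t := by
  obtain ⟨ω, hω, rfl⟩ := cs.exists_isReduced w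
  exact cs.isRightInversion_of_mem_rightInvSeq hω
    (mem_rightInvSeq_of_reflSign_wordProd_eq_neg_one h)

theorem IsReflection.reflSign_self {t : W} (ht : cs.IsReflection t) : cs.reflSign t t = -1 := by
  obtain ⟨v, i, rfl⟩ := ht
  have hcancel := cs.reflSign_mul v⁻¹ v (s i)
  rw [inv_mul_cancel, reflSign_one] at hcancel
  have hconj : v⁻¹ * (v * s i * v⁻¹) * v⁻¹⁻¹ = s i := by group
  have hsi : s i * s i * (s i)⁻¹ = s i := by group
  rw [reflSign_mul, hconj, reflSign_mul, hsi, reflSign_simple, if_pos rfl, neg_one_mul, mul_neg,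
    mul_comm, ← hcancel]

theorem IsReflection.reflSign_mul_self {t : W} (ht : cs.IsReflection t) (w : W) :
    cs.reflSign (w * t) t = -cs.reflSign w t := by
  rw [reflSign_mul, ht.reflSign_self, ht.mul_self, one_mul, ht.inv, neg_one_mul]

theorem IsReflection.reflSign_eq_neg_one_iff {t : W} (ht : cs.IsReflection t) (w : W) :
    cs.reflSign w t = -1 ↔ cs.IsRightInversion w t := by
  refine ⟨isRightInversion_of_reflSign_eq_neg_one, fun hw => ?_⟩
  rcases Int.units_eq_one_or (cs.reflSign w t) with h | h
  · have hwt := isRightInversion_of_reflSign_eq_neg_one (by rw [ht.reflSign_mul_self, h])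
    exact absurd hw (ht.isRightInversion_mul_left_iff.mp hwt)
  · exact h

theorem mem_rightInvSeq_of_isRightInversion {ω : List B} {t : W}
    (h : cs.IsRightInversion (π ω) t) : t ∈ cs.rightInvSeq ω :=
  mem_rightInvSeq_of_reflSign_wordProd_eq_neg_one ((h.1.reflSign_eq_neg_one_iff _).mpr h)

theorem IsReflection.isRightInversion_mul_iff {t : W} (ht : cs.IsReflection t) (a b : W) :
    cs.IsRightInversion (a * b) t ↔
      Xor (cs.IsRightInversion b t) (cs.IsRightInversion a (b * t * b⁻¹)) := by
  rw [← ht.reflSign_eq_neg_one_iff, ← ht.reflSign_eq_neg_one_iff,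
    ← (ht.conj b).reflSign_eq_neg_one_iff, reflSign_mul]
  rcases Int.units_eq_one_or (cs.reflSign b t) with h | h <;>
    rcases Int.units_eq_one_or (cs.reflSign a (b * t * b⁻¹)) with h' | h' <;>
    simp [h, h']

theorem IsReflection.isLeftInversion_mul_iff {t : W} (ht : cs.IsReflection t) (a b : W) :
    cs.IsLeftInversion (a * b) t ↔
      Xor (cs.IsLeftInversion a t) (cs.IsLeftInversion b (a⁻¹ * t * a)) := by
  rw [← isRightInversion_inv_iff, ← isRightInversion_inv_iff, ← isRightInversion_inv_iff,
    mul_inv_rev, ht.isRightInversion_mul_iff, inv_inv]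

end ReflectionSign

section Parabolic

variable {cs} {I : Set B}

theorem simple_mem_parab {i : B} (hi : i ∈ I) : s i ∈ parab cs I :=
  Subgroup.subset_closure ⟨i, hi, rfl⟩

theorem mem_parab_iff {y : W} :
    y ∈ parab cs I ↔ ∃ ω : List B, (∀ i ∈ ω, i ∈ I) ∧ π ω = y := by
  constructor
  · intro hy
    induction hy using Subgroup.closure_induction with
    | mem x hx =>
      obtain ⟨i, hi, rfl⟩ := hx
      exact ⟨[i], by simpa using hi, by simp⟩
    | one => exact ⟨[], by simp, by simp⟩
    | mul x y _ _ ihx ihy =>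
      obtain ⟨ω₁, h₁, rfl⟩ := ihx
      obtain ⟨ω₂, h₂, rfl⟩ := ihy
      exact ⟨ω₁ ++ ω₂, by simpa [or_imp, forall_and] using ⟨h₁, h₂⟩, wordProd_append ..⟩
    | inv x _ ihx =>
      obtain ⟨ω, h, rfl⟩ := ihx
      exact ⟨ω.reverse, by simpa using h, wordProd_reverse ..⟩
  · rintro ⟨ω, hω, rfl⟩
    induction ω with
    | nil => exact one_mem _
    | cons i ω ih =>
      rw [wordProd_cons]
      exact mul_mem (simple_mem_parab (hω i mem_cons_self))
        (ih fun j hj => hω j (mem_cons_of_mem i hj))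

theorem mem_parab_of_mem_rightInvSeq {ω : List B} (hω : ∀ i ∈ ω, i ∈ I) {t : W}
    (ht : t ∈ cs.rightInvSeq ω) : t ∈ parab cs I := by
  induction ω with
  | nil => simp at ht
  | cons i ω ih =>
    have hω' : ∀ j ∈ ω, j ∈ I := fun j hj => hω j (mem_cons_of_mem i hj)
    rw [rightInvSeq, mem_cons] at ht
    rcases ht with rfl | ht
    · have hπ : π ω ∈ parab cs I := mem_parab_iff.mpr ⟨ω, hω', rfl⟩
      exact mul_mem (mul_mem (inv_mem hπ) (simple_mem_parab (hω i mem_cons_self))) hπ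
    · exact ih hω' ht

theorem IsRightInversion.mem_parab {y t : W} (hy : y ∈ parab cs I)
    (h : cs.IsRightInversion y t) : t ∈ parab cs I := by
  obtain ⟨ω, hω, rfl⟩ := mem_parab_iff.mp hy
  exact mem_parab_of_mem_rightInvSeq hω (mem_rightInvSeq_of_isRightInversion h)

theorem IsReflection.mk_mul_eq_mk_of_length_lt {t u x : W} (ht : cs.IsReflection t)
    (hx : (QuotientGroup.mk x : W ⧸ parab cs I) = QuotientGroup.mk (t * u))
    (hu : ℓ u < ℓ (t * u)) (hx' : ℓ x < ℓ (t * x)) :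
    (QuotientGroup.mk (t * u) : W ⧸ parab cs I) = QuotientGroup.mk u := by
  have hz : (t * u)⁻¹ * x ∈ parab cs I := QuotientGroup.eq.mp hx.symm
  have htu : cs.IsLeftInversion (t * u) t := ⟨ht, by rwa [← mul_assoc, ht.mul_self, one_mul]⟩
  have hx_not : ¬cs.IsLeftInversion x t := fun h => lt_asymm h.2 hx'
  have hr : cs.IsLeftInversion ((t * u)⁻¹ * x) ((t * u)⁻¹ * t * (t * u)) := by
    have hsplit := ht.isLeftInversion_mul_iff (t * u) ((t * u)⁻¹ * x)
    rw [mul_inv_cancel_left] at hsplit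
    simpa [htu, hx_not] using hsplit
  have hconj : (t * u)⁻¹ * u = (t * u)⁻¹ * t * (t * u) := by
    rw [mul_assoc _ t, ← mul_assoc t, ht.mul_self, one_mul]
  rw [QuotientGroup.eq, hconj]
  exact (cs.isRightInversion_inv_iff.mpr hr).mem_parab (inv_mem hz)

end Parabolic

theorem exists_length_eq_minLenQ (I : Set B) (q : W ⧸ parab cs I) :
    ∃ u : W, (QuotientGroup.mk u : W ⧸ parab cs I) = q ∧ ℓ u = minLenQ cs I q :=
  Nat.sInf_mem (Set.image_nonempty.mpr ⟨q.out, QuotientGroup.out_eq' q⟩)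

theorem minLenQ_mk_le_length (I : Set B) (u : W) : minLenQ cs I (QuotientGroup.mk u) ≤ ℓ u :=
  Nat.sInf_le ⟨u, rfl, rfl⟩

end CoxeterSystem

/-- For a reflection `t` and `w ∈ W`, `twW_I = wW_I` if and only if `ℓ((tw)^I) = ℓ(w^I)`. -/
theorem fixed_coset_iff_length_eq (cs : CoxeterSystem M W) (I : Set B) (t : W)
    (ht : cs.IsReflection t) (w : W) :
    (QuotientGroup.mk (t * w) : W ⧸ parab cs I) = QuotientGroup.mk w ↔
      minLenQ cs I (QuotientGroup.mk (t * w)) = minLenQ cs I (QuotientGroup.mk w) := by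
  refine ⟨fun h => by rw [h], fun hlen => ?_⟩
  obtain ⟨u, hu, hu_len⟩ := cs.exists_length_eq_minLenQ I (QuotientGroup.mk w)
  obtain ⟨x, hx, hx_len⟩ := cs.exists_length_eq_minLenQ I (QuotientGroup.mk (t * w))
  have htu : (QuotientGroup.mk (t * u) : W ⧸ parab cs I) = QuotientGroup.mk (t * w) := by
    simpa only [MulAction.Quotient.smul_mk, smul_eq_mul] using congrArg (t • ·) hu
  have htx : (QuotientGroup.mk (t * x) : W ⧸ parab cs I) = QuotientGroup.mk w := by
    simpa only [MulAction.Quotient.smul_mk, smul_eq_mul, ← mul_assoc, ht.mul_self, one_mul]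
      using congrArg (t • ·) hx
  have hu_lt : cs.length u < cs.length (t * u) := by
    refine lt_of_le_of_ne ?_ (ht.length_mul_right_ne u).symm
    rw [hu_len, ← hlen, ← htu]
    exact cs.minLenQ_mk_le_length I (t * u)
  have hx_lt : cs.length x < cs.length (t * x) := by
    refine lt_of_le_of_ne ?_ (ht.length_mul_right_ne x).symm
    rw [hx_len, hlen, ← htx]
    exact cs.minLenQ_mk_le_length I (t * x)
  rw [← htu, ← hu]
  exact ht.mk_mul_eq_mk_of_length_lt (hx.trans htu.symm) hu_lt hx_lt
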